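/- Let $K \geq 2$, let $c$ be a fixed index, and let $\alpha_j > 1$ for $j \neq c$ with $\tilde\alpha_0 = 1 + \sum_{j\neq c}\alpha_j$. Then the information regularization loss $\mathcal{R}(\alpha) = \frac{1}{2}\sum_{j\neq c}(\alpha_j-1)^2\,(\psi^{(1)}(\alpha_j) - \psi^{(1)}(\tilde\alpha_0))$ is nondecreasing in each $\alpha_k$, $k \neq c$: its partial derivative with respect to $\alpha_k$ is nonnegative. -/

import Mathlib

noncomputable def digamma (x : ℝ) : ℝ := deriv (fun y => Real.log (Real.Gamma y)) x

noncomputable def trigamma (x : ℝ) : ℝ := deriv digamma x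

/-!
On `(0, ∞)` the trigamma function is `ψ₁(x) = ∑ₙ (x + n)⁻²`, obtained by differentiating the
Bohr–Mollerup approximations of `log Γ` twice; hence `ψ₁' = -2 ∑ₙ (x + n)⁻³`.
Along the coordinate `αₖ = s`, with `B = 1 + ∑_{j ≠ c, k} αⱼ`, the loss reads
`½ [(s - 1)² (ψ₁ s - ψ₁ (s + B)) + C - W ψ₁ (s + B)]` with `W = ∑_{j ≠ c, k} (αⱼ - 1)² ≥ 0`.
The `W`-part is nondecreasing since `ψ₁` is decreasing. The own term has derivative
`(t - 1) [F t - F (t + B)]` with `F y = ψ₁ y - (t - 1) ∑ₙ (y + n)⁻³`, and `F` is antitone on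
`[t, ∞)` because `3 (y - 1) ∑ₙ (y + n)⁻⁴ ≤ 2 ∑ₙ (y + n)⁻³`. The latter follows by comparing both
series with telescoping ones: `2 ∑ₙ (y + n)⁻³ ≥ y⁻² + y⁻³` and `3 ∑ₙ (y + n)⁻⁴ ≤ (y - 1/2)⁻³`.
-/

open Filter Topology Set Real

noncomputable def hurwitzSum (p : ℕ) (x : ℝ) : ℝ := ∑' n : ℕ, ((x + n) ^ p)⁻¹

lemma summable_inv_pow_add {p : ℕ} (hp : 2 ≤ p) {x : ℝ} (hx : 0 < x) :
    Summable fun n : ℕ => ((x + n) ^ p)⁻¹ := by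
  refine ((Real.summable_one_div_nat_add_rpow x p).2 (by exact_mod_cast hp)).congr fun n => ?_
  rw [abs_of_pos (by positivity), Real.rpow_natCast, one_div, add_comm]

lemma hurwitzSum_nonneg (p : ℕ) {x : ℝ} (hx : 0 < x) : 0 ≤ hurwitzSum p x :=
  tsum_nonneg fun n => by positivity

lemma hasDerivAt_inv_pow_add (p : ℕ) {x a : ℝ} (h : 0 < x + a) :
    HasDerivAt (fun y => ((y + a) ^ p)⁻¹) (-p * ((x + a) ^ (p + 1))⁻¹) x := by
  have hpow : HasDerivAt (fun y => (y + a) ^ p) (p * (x + a) ^ (p - 1)) x := by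
    simpa using ((hasDerivAt_id x).add_const a).fun_pow p
  refine (hpow.fun_inv (pow_ne_zero p h.ne')).congr_deriv ?_
  rcases p with _ | p
  · simp
  · simp only [Nat.add_sub_cancel, Nat.cast_add, Nat.cast_one]
    field_simp
    ring

theorem hasDerivAt_hurwitzSum {p : ℕ} (hp : 2 ≤ p) {x : ℝ} (hx : 0 < x) :
    HasDerivAt (hurwitzSum p) (-p * hurwitzSum (p + 1) x) x := by
  have hx2 : x ∈ Ioi (x / 2) := half_lt_self hx
  have := hasDerivAt_tsum_of_isPreconnected
    ((summable_inv_pow_add (p := p + 1) (by omega) (half_pos hx)).mul_left (p : ℝ))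
    isOpen_Ioi isPreconnected_Ioi
    (fun n y hy => hasDerivAt_inv_pow_add p (by have : 0 < y := (half_pos hx).trans hy; positivity))
    (fun n y hy => ?_) hx2 (summable_inv_pow_add hp hx) hx2
  · rwa [tsum_mul_left] at this
  · have hy : x / 2 < y := hy
    have : 0 < y := by linarith
    rw [norm_mul, norm_neg, Real.norm_natCast, Real.norm_of_nonneg (by positivity)]
    gcongr

lemma tsum_sub_succ {f : ℕ → ℝ} (hf : Summable f) : ∑' n, (f n - f (n + 1)) = f 0 := by
  rw [hf.tsum_sub ((summable_nat_add_iff 1).2 hf), hf.tsum_eq_zero_add]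
  ring

theorem inv_sq_add_inv_cube_le_two_mul_hurwitzSum_three {x : ℝ} (hx : 0 < x) :
    (x ^ 2)⁻¹ + (x ^ 3)⁻¹ ≤ 2 * hurwitzSum 3 x := by
  have h2 := summable_inv_pow_add (p := 2) le_rfl hx
  have h3 := summable_inv_pow_add (p := 3) (by norm_num) hx
  have h3' := (summable_nat_add_iff 1).2 h3
  -- `y⁻² - (y+1)⁻² ≤ y⁻³ + (y+1)⁻³`, summed over `y = x + n`
  have hterm (n : ℕ) : ((x + n) ^ 2)⁻¹ - ((x + (n + 1 : ℕ)) ^ 2)⁻¹ ≤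
      ((x + n) ^ 3)⁻¹ + ((x + (n + 1 : ℕ)) ^ 3)⁻¹ := by
    have hy : 0 < x + n := by positivity
    push_cast
    rw [← add_assoc]
    generalize x + n = y at hy ⊢
    rw [inv_sub_inv (by positivity) (by positivity), inv_add_inv (by positivity) (by positivity),
      div_le_div_iff₀ (by positivity) (by positivity)]
    nlinarith [mul_pos hy (mul_pos hy hy), pow_pos hy 4, pow_pos hy 5, pow_pos hy 6]
  have := (h2.sub ((summable_nat_add_iff 1).2 h2)).tsum_le_tsum hterm (h3.add h3')
  rw [tsum_sub_succ h2, h3.tsum_add h3', h3.tsum_eq_zero_add] at this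
  rw [hurwitzSum, h3.tsum_eq_zero_add]
  push_cast at this ⊢
  rw [add_zero] at this ⊢
  linarith

theorem three_mul_hurwitzSum_four_le {x : ℝ} (hx : 1 / 2 < x) :
    3 * hurwitzSum 4 x ≤ ((x - 1 / 2) ^ 3)⁻¹ := by
  have h4 := summable_inv_pow_add (p := 4) (by norm_num) (by linarith : 0 < x)
  have h3 := summable_inv_pow_add (p := 3) (by norm_num) (by linarith : 0 < x - 1 / 2)
  -- `3 y⁻⁴ ≤ (y - 1/2)⁻³ - (y + 1/2)⁻³`, summed over `y = x + n`
  have hterm (n : ℕ) : 3 * ((x + n) ^ 4)⁻¹ ≤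
      ((x - 1 / 2 + n) ^ 3)⁻¹ - ((x - 1 / 2 + (n + 1 : ℕ)) ^ 3)⁻¹ := by
    have hy : 1 / 2 < x + n := by have := n.cast_nonneg (α := ℝ); linarith
    have hl : x - 1 / 2 + n = x + n - 1 / 2 := by ring
    have hr : x - 1 / 2 + (n + 1 : ℕ) = x + n + 1 / 2 := by push_cast; ring
    rw [hl, hr]
    generalize x + n = y at hy ⊢
    have hy' : 0 < y - 1 / 2 := by linarith
    rw [inv_sub_inv (by positivity) (by positivity), ← div_eq_mul_inv,
      div_le_div_iff₀ (by positivity) (by positivity)]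
    nlinarith [sq_nonneg (y ^ 2 - 9 / 80)]
  have h3' := (summable_nat_add_iff 1).2 h3
  have := (h4.mul_left 3).tsum_le_tsum hterm (h3.sub h3')
  rwa [tsum_mul_left, tsum_sub_succ h3, Nat.cast_zero, add_zero] at this

theorem three_mul_sub_one_mul_hurwitzSum_four_le {x : ℝ} (hx : 0 < x) :
    3 * (x - 1) * hurwitzSum 4 x ≤ 2 * hurwitzSum 3 x := by
  rcases le_or_gt x 1 with hx1 | hx1
  · have := hurwitzSum_nonneg 4 hx
    have := hurwitzSum_nonneg 3 hx
    nlinarith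
  have h4 := three_mul_hurwitzSum_four_le (by linarith : 1 / 2 < x)
  have h3 := inv_sq_add_inv_cube_le_two_mul_hurwitzSum_three hx
  have hpoly : (x - 1) * ((x - 1 / 2) ^ 3)⁻¹ ≤ (x ^ 2)⁻¹ + (x ^ 3)⁻¹ := by
    have hx' : 0 < x - 1 / 2 := by linarith
    rw [← div_eq_mul_inv, inv_add_inv (by positivity) (by positivity),
      div_le_div_iff₀ (by positivity) (by positivity)]
    have : 0 < (x - 1 / 2) ^ 3 / 2 + (x - 1 / 4) / 4 := by
      have := pow_pos hx' 3; linarith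
    nlinarith [mul_pos (pow_pos hx 2) this]
  calc 3 * (x - 1) * hurwitzSum 4 x = (x - 1) * (3 * hurwitzSum 4 x) := by ring
    _ ≤ (x - 1) * ((x - 1 / 2) ^ 3)⁻¹ := mul_le_mul_of_nonneg_left h4 (by linarith)
    _ ≤ 2 * hurwitzSum 3 x := hpoly.trans h3

noncomputable def digammaSeries (x : ℝ) : ℝ :=
  -eulerMascheroniConstant + ∑' m : ℕ, (((m : ℝ) + 1)⁻¹ - (x + m)⁻¹)

lemma norm_inv_succ_sub_inv_add_le (m : ℕ) {a b x : ℝ} (ha : 0 < a) (ha1 : a ≤ 1)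
    (hax : a ≤ x) (hxb : x ≤ b) :
    ‖((m : ℝ) + 1)⁻¹ - (x + m)⁻¹‖ ≤ (b + 1) * ((a + m) ^ 2)⁻¹ := by
  have hm : (0 : ℝ) ≤ m := m.cast_nonneg
  have hnum : |x + m - (m + 1)| ≤ b + 1 := by
    rw [abs_le]; constructor <;> linarith
  have hden : (a + m) ^ 2 ≤ (m + 1) * (x + m) := by nlinarith
  rw [inv_sub_inv (by positivity) (by linarith), norm_div, Real.norm_eq_abs,
    Real.norm_of_nonneg (by nlinarith), ← div_eq_mul_inv]
  exact div_le_div₀ (by linarith) hnum (by positivity) hden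

lemma summable_inv_succ_sub_inv_add {x : ℝ} (hx : 0 < x) :
    Summable fun m : ℕ => ((m : ℝ) + 1)⁻¹ - (x + m)⁻¹ :=
  .of_norm_bounded ((summable_inv_pow_add le_rfl (lt_min hx one_pos)).mul_left (x + 1))
    fun m => norm_inv_succ_sub_inv_add_le m (lt_min hx one_pos) (min_le_right _ _)
      (min_le_left _ _) le_rfl

theorem hasDerivAt_digammaSeries {x : ℝ} (hx : 0 < x) :
    HasDerivAt digammaSeries (hurwitzSum 2 x) x := by
  have hx2 : x ∈ Ioi (x / 2) := half_lt_self hx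
  have hterm (m : ℕ) (y : ℝ) (hy : y ∈ Ioi (x / 2)) :
      HasDerivAt (fun z : ℝ => ((m : ℝ) + 1)⁻¹ - (z + m)⁻¹) ((y + m) ^ 2)⁻¹ y := by
    have : 0 < y := (half_pos hx).trans hy
    have := (((hasDerivAt_id y).add_const (m : ℝ)).fun_inv (by positivity)).const_sub
      (((m : ℝ) + 1)⁻¹)
    simpa [div_eq_mul_inv] using this
  have hbound (m : ℕ) (y : ℝ) (hy : y ∈ Ioi (x / 2)) :
      ‖((y + m) ^ 2)⁻¹‖ ≤ ((x / 2 + m) ^ 2)⁻¹ := by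
    have hy : x / 2 < y := hy
    have : 0 < y := (half_pos hx).trans hy
    rw [Real.norm_of_nonneg (by positivity)]
    gcongr
  exact (hasDerivAt_tsum_of_isPreconnected (summable_inv_pow_add le_rfl (half_pos hx))
    isOpen_Ioi isPreconnected_Ioi hterm hbound hx2 (summable_inv_succ_sub_inv_add hx)
    hx2).const_add _

lemma hasDerivAt_logGammaSeq (n : ℕ) {x : ℝ} (hx : 0 < x) :
    HasDerivAt (fun y => BohrMollerup.logGammaSeq y n)
      (log n - ∑ m ∈ Finset.range (n + 1), (x + m)⁻¹) x := by
  have hlog : HasDerivAt (fun y => ∑ m ∈ Finset.range (n + 1), log (y + m))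
      (∑ m ∈ Finset.range (n + 1), (x + m)⁻¹) x :=
    HasDerivAt.fun_sum fun m _ =>
      ((hasDerivAt_id x).add_const (m : ℝ)).log (by positivity) |>.congr_deriv (one_div _)
  exact (((hasDerivAt_mul_const (log n)).add_const _).sub hlog).congr_deriv (by simp)

lemma tendsto_log_sub_harmonic_succ :
    Tendsto (fun n : ℕ => log n - harmonic (n + 1)) atTop (𝓝 (-eulerMascheroniConstant)) := by
  have h := (tendsto_harmonic_sub_log.comp (tendsto_add_atTop_nat 1)).add
    tendsto_log_nat_add_one_sub_log
  rw [add_zero] at h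
  refine h.neg.congr fun n => ?_
  simp only [Function.comp_apply, Nat.cast_add, Nat.cast_one]
  ring

theorem tendstoLocallyUniformlyOn_deriv_logGammaSeq :
    TendstoLocallyUniformlyOn (fun (n : ℕ) (x : ℝ) => log n - ∑ m ∈ Finset.range (n + 1), (x + m)⁻¹)
      digammaSeries atTop (Ioi 0) := by
  refine tendstoLocallyUniformlyOn_of_forall_exists_nhds fun (x : ℝ) (hx : 0 < x) =>
    ⟨Ioo (x / 2) (2 * x), mem_nhdsWithin_of_mem_nhds (Ioo_mem_nhds (by linarith) (by linarith)),
      ?_⟩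
  have hser := tendstoUniformlyOn_tsum_nat
    ((summable_inv_pow_add le_rfl (lt_min (half_pos hx) one_pos)).mul_left (2 * x + 1))
    fun m (y : ℝ) (hy : y ∈ Ioo (x / 2) (2 * x)) => norm_inv_succ_sub_inv_add_le m
      (lt_min (half_pos hx) one_pos) (min_le_right _ _) ((min_le_left _ _).trans hy.1.le) hy.2.le
  have hsum : TendstoUniformlyOn (fun (n : ℕ) (y : ℝ) =>
      (log n - harmonic (n + 1)) + ∑ m ∈ Finset.range (n + 1), (((m : ℝ) + 1)⁻¹ - (y + m)⁻¹))
      digammaSeries atTop (Ioo (x / 2) (2 * x)) :=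
    (tendsto_log_sub_harmonic_succ.tendstoUniformlyOn_const _).add
      fun u hu => (tendsto_add_atTop_nat 1).eventually (hser u hu)
  refine hsum.congr (Eventually.of_forall fun n y _ => ?_)
  simp only [harmonic, Finset.sum_sub_distrib]
  push_cast
  ring

theorem hasDerivAt_log_Gamma {x : ℝ} (hx : 0 < x) :
    HasDerivAt (fun y => log (Gamma y)) (digammaSeries x) x :=
  hasDerivAt_of_tendstoLocallyUniformlyOn isOpen_Ioi tendstoLocallyUniformlyOn_deriv_logGammaSeq
    (Eventually.of_forall fun n _ hy => hasDerivAt_logGammaSeq n hy)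
    (fun _ hy => BohrMollerup.tendsto_log_gamma hy) hx

theorem trigamma_eq_hurwitzSum {x : ℝ} (hx : 0 < x) : trigamma x = hurwitzSum 2 x := by
  have : digamma =ᶠ[𝓝 x] digammaSeries :=
    eventually_of_mem (isOpen_Ioi.mem_nhds hx) fun y hy => (hasDerivAt_log_Gamma hy).deriv
  rw [trigamma, this.deriv_eq, (hasDerivAt_digammaSeries hx).deriv]

theorem hasDerivAt_trigamma {x : ℝ} (hx : 0 < x) :
    HasDerivAt trigamma (-2 * hurwitzSum 3 x) x := by
  have := hasDerivAt_hurwitzSum (p := 2) le_rfl hx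
  push_cast at this
  exact this.congr_of_eventuallyEq
    (eventually_of_mem (isOpen_Ioi.mem_nhds hx) fun y hy => trigamma_eq_hurwitzSum hy)

theorem sub_one_mul_hurwitzSum_three_sub_le {t v : ℝ} (ht : 0 < t) (htv : t ≤ v) :
    (t - 1) * (hurwitzSum 3 t - hurwitzSum 3 v) ≤ trigamma t - trigamma v := by
  have hderiv (y : ℝ) (hy : t ≤ y) : HasDerivAt (fun y => trigamma y - (t - 1) * hurwitzSum 3 y)
      (-2 * hurwitzSum 3 y - (t - 1) * (-3 * hurwitzSum 4 y)) y := by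
    have hy0 : 0 < y := ht.trans_le hy
    exact (hasDerivAt_trigamma hy0).sub
      ((hasDerivAt_hurwitzSum (p := 3) (by norm_num) hy0).const_mul (t - 1))
  have hanti : AntitoneOn (fun y => trigamma y - (t - 1) * hurwitzSum 3 y) (Ici t) := by
    refine antitoneOn_of_hasDerivWithinAt_nonpos (convex_Ici t)
      (fun y hy => (hderiv y hy).continuousAt.continuousWithinAt)
      (fun y hy => (hderiv y (interior_subset hy)).hasDerivWithinAt) fun y hy => ?_
    have hy : t ≤ y := interior_subset hy
    have hy0 : 0 < y := ht.trans_le hy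
    have := three_mul_sub_one_mul_hurwitzSum_four_le hy0
    nlinarith [hurwitzSum_nonneg 4 hy0]
  have := hanti self_mem_Ici htv htv
  linarith

theorem deriv_trigamma_loss_slice_nonneg {B C W t : ℝ} (hB : 0 ≤ B) (hW : 0 ≤ W) (ht : 1 ≤ t) :
    0 ≤ deriv (fun s => 1 / 2 * ((s - 1) ^ 2 * (trigamma s - trigamma (s + B)) +
      (C - W * trigamma (s + B)))) t := by
  have ht0 : 0 < t := by linarith
  have hv : 0 < t + B := by linarith
  have hshift := (hasDerivAt_trigamma hv).comp_add_const t B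
  have hsq : HasDerivAt (fun s : ℝ => (s - 1) ^ 2) (2 * (t - 1)) t := by
    simpa using ((hasDerivAt_id t).sub_const 1).fun_pow 2
  rw [(((hsq.fun_mul ((hasDerivAt_trigamma ht0).fun_sub hshift)).fun_add
    ((hasDerivAt_const t C).fun_sub (hshift.const_mul W))).const_mul (1 / 2)).deriv]
  have hown := sub_one_mul_hurwitzSum_three_sub_le ht0 (le_add_of_nonneg_right hB)
  have := mul_le_mul_of_nonneg_left hown (sub_nonneg.2 ht)
  nlinarith [mul_nonneg hW (hurwitzSum_nonneg 3 hv)]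

lemma Finset.sum_comp_update_of_mem {ι β M : Type*} [AddCommMonoid M] [DecidableEq ι]
    {s : Finset ι} {i : ι} (h : i ∈ s) (f : ι → β) (b : β) (g : β → M) :
    ∑ x ∈ s, g (Function.update f i b x) = g b + ∑ x ∈ s \ {i}, g (f x) := by
  rw [Finset.sum_eq_add_sum_sdiff_singleton_of_mem h, Function.update_self]
  congr 1
  exact Finset.sum_congr rfl fun j hj => by
    rw [Function.update_of_ne (by simpa using (Finset.mem_sdiff.1 hj).2)]

theorem stmt_14_general (K : ℕ) (c k : Fin K) (hkc : k ≠ c)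
    (α : Fin K → ℝ) (hα : ∀ j, j ≠ c → 1 < α j) :
    ∀ t > (1 : ℝ),
      0 ≤ deriv
        (fun s : ℝ =>
          (1 / 2) * ∑ j ∈ Finset.univ.erase c,
            (Function.update α k s j - 1) ^ 2 *
              (trigamma (Function.update α k s j) -
                trigamma (1 + ∑ i ∈ Finset.univ.erase c, Function.update α k s i))) t := by
  intro t ht
  set E := Finset.univ.erase c
  have hk : k ∈ E := Finset.mem_erase.2 ⟨hkc, Finset.mem_univ k⟩
  set B := 1 + ∑ j ∈ E \ {k}, α j with hBdef
  have hB : 0 ≤ B := by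
    have : 0 ≤ ∑ j ∈ E \ {k}, α j := Finset.sum_nonneg fun j hj =>
      (zero_lt_one.trans (hα j (Finset.ne_of_mem_erase (Finset.mem_sdiff.1 hj).1))).le
    linarith
  have hloss : ∀ s, ∑ j ∈ E, (Function.update α k s j - 1) ^ 2 *
      (trigamma (Function.update α k s j) - trigamma (1 + ∑ i ∈ E, Function.update α k s i)) =
      (s - 1) ^ 2 * (trigamma s - trigamma (s + B)) + (∑ j ∈ E \ {k}, (α j - 1) ^ 2 * trigamma (α j)
        - (∑ j ∈ E \ {k}, (α j - 1) ^ 2) * trigamma (s + B)) := by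
    intro s
    have hsum : 1 + ∑ i ∈ E, Function.update α k s i = s + B := by
      rw [Finset.sum_update_of_mem hk, hBdef]; ring
    rw [hsum, Finset.sum_comp_update_of_mem hk α s
      fun x => (x - 1) ^ 2 * (trigamma x - trigamma (s + B))]
    simp only [mul_sub, Finset.sum_sub_distrib, Finset.sum_mul]
  simp only [hloss]
  exact deriv_trigamma_loss_slice_nonneg hB (Finset.sum_nonneg fun j _ => sq_nonneg _) ht.le

theorem stmt_14 (K : ℕ) (hK : 2 ≤ K) (c k : Fin K) (hkc : k ≠ c)
    (α : Fin K → ℝ) (hα : ∀ j, j ≠ c → 1 < α j) :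
    ∀ t > (1 : ℝ),
      0 ≤ deriv
        (fun s : ℝ =>
          (1 / 2) * ∑ j ∈ Finset.univ.erase c,
            (Function.update α k s j - 1) ^ 2 *
              (trigamma (Function.update α k s j) -
                trigamma (1 + ∑ i ∈ Finset.univ.erase c, Function.update α k s i))) t :=
  stmt_14_general K c k hkc α hα
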